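/- In a prevalent strict finitistic model, assertibility satisfies the classical truth clauses: A∧B is assertible iff both are; A∨B is assertible iff one is; A→B is assertible iff A is not assertible or B is assertible; ¬A is assertible iff A is not assertible; ∀xA is assertible iff A[d/x] is assertible for all d ∈ D; ∃xA is assertible iff A[d/x] is assertible for some d ∈ D. -/
import Mathlib


/-- Formulas of the (domain-extended) language of strict finitistic first-order
logic: atoms `atom P ds` (predicate symbol `P` applied to domain elements),
the existence predicate `E`, the connectives, global negation `neg`, and the
two modes (global / local) of universal and existential quantification. -/
inductive Fm (D : Type) : Type
  | top
  | bot
  | atom (P : ℕ) (ds : List D)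
  | E (d : D)
  | conj (A B : Fm D)
  | disj (A B : Fm D)
  | impl (A B : Fm D)
  | neg (A : Fm D)
  | allG (A : D → Fm D)
  | allL (A : D → Fm D)
  | exG (A : D → Fm D)
  | exL (A : D → Fm D)

/-- Weak negation `⌐A := A → ⊥`. -/
def Fm.wneg {D : Type} (A : Fm D) : Fm D := Fm.impl A Fm.bot

/-- A strict finitistic model: a rooted partially ordered Kripke frame with a
constant domain `D` and a monotone valuation of atoms (including the
existence predicate `E`). -/
structure SFModel (D : Type) : Type 1 where
  K : Type
  le : K → K → Prop
  refl : ∀ k, le k k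
  trans : ∀ {a b c}, le a b → le b c → le a c
  antisymm : ∀ {a b}, le a b → le b a → a = b
  root : K
  root_le : ∀ k, le root k
  atomVal : ℕ → List D → K → Prop
  EVal : D → K → Prop
  atom_mono : ∀ {P ds k k'}, le k k' → atomVal P ds k → atomVal P ds k'
  E_mono : ∀ {d k k'}, le k k' → EVal d k → EVal d k'

/-- The strict finitistic forcing relation `k ⊨ A`. -/
def SFModel.force {D : Type} (W : SFModel D) : W.K → Fm D → Prop
  | _, Fm.top => True
  | _, Fm.bot => False
  | k, Fm.atom P ds => W.atomVal P ds k
  | k, Fm.E d => W.EVal d k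
  | k, Fm.conj A B => W.force k A ∧ W.force k B
  | k, Fm.disj A B => W.force k A ∨ W.force k B
  | k, Fm.impl A B => ∀ k', W.le k k' → W.force k' A → ∃ k'', W.le k' k'' ∧ W.force k'' B
  | _, Fm.neg A => ∀ l, ¬ W.force l A
  | k, Fm.allG A => ∀ (d : D) (k' : W.K), W.le k k' → ∃ k'', W.le k' k'' ∧ W.force k'' (A d)
  | k, Fm.allL A => ∀ (d : D) (k' : W.K), W.le k k' → W.EVal d k' →
      ∃ k'', W.le k' k'' ∧ W.force k'' (A d)
  | k, Fm.exG A => ∃ d : D, W.force k (A d)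
  | k, Fm.exL A => ∃ d : D, W.EVal d k ∧ W.force k (A d)

/-- `A` is valid in `W`: forced at every node. -/
def SFModel.valid {D : Type} (W : SFModel D) (A : Fm D) : Prop := ∀ k, W.force k A

/-- `A` is assertible in `W`: forced at some node. -/
def SFModel.assertible {D : Type} (W : SFModel D) (A : Fm D) : Prop := ∃ k, W.force k A

/-- `A` is prevalent in `W`: above every node it is eventually forced. -/
def SFModel.prevalent {D : Type} (W : SFModel D) (A : Fm D) : Prop :=
  ∀ k, ∃ k', W.le k k' ∧ W.force k' A

/-- Atomic prevalence property: every assertible closed atom (including `E`)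
is prevalent. -/
def SFModel.atomicPrev {D : Type} (W : SFModel D) : Prop :=
  (∀ (P : ℕ) (ds : List D), W.assertible (Fm.atom P ds) → W.prevalent (Fm.atom P ds)) ∧
  (∀ d : D, W.assertible (Fm.E d) → W.prevalent (Fm.E d))

/-- Formula prevalence property: every assertible closed formula is prevalent. -/
def SFModel.formulaPrev {D : Type} (W : SFModel D) : Prop :=
  ∀ A : Fm D, W.assertible A → W.prevalent A

/-- Object prevalence property: `E(d)` is prevalent for every domain element. -/
def SFModel.objectPrev {D : Type} (W : SFModel D) : Prop :=
  ∀ d : D, W.prevalent (Fm.E d)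

/-- A prevalent model: both the formula and object prevalence properties. -/
def SFModel.prevModel {D : Type} (W : SFModel D) : Prop :=
  W.formulaPrev ∧ W.objectPrev

/-- Forcing is monotone along the accessibility relation. -/
lemma SFModel.force_mono {D : Type} (W : SFModel D) :
    ∀ (A : Fm D) {k k' : W.K}, W.le k k' → W.force k A → W.force k' A := by
  intro A
  induction A with
  | top => intro k k' _ h; exact h
  | bot => intro k k' _ h; exact h
  | atom P ds => intro k k' hle h; exact W.atom_mono hle h
  | E d => intro k k' hle h; exact W.E_mono hle h
  | conj A B ihA ihB => intro k k' hle h; exact ⟨ihA hle h.1, ihB hle h.2⟩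
  | disj A B ihA ihB =>
      intro k k' hle h
      exact h.elim (fun h => Or.inl (ihA hle h)) (fun h => Or.inr (ihB hle h))
  | impl A B ihA ihB =>
      intro k k' hle h k'' hle' hA
      exact h k'' (W.trans hle hle') hA
  | neg A ih => intro k k' _ h; exact h
  | allG A ih =>
      intro k k' hle h d k'' hle'
      exact h d k'' (W.trans hle hle')
  | allL A ih =>
      intro k k' hle h d k'' hle' hE
      exact h d k'' (W.trans hle hle') hE
  | exG A ih =>
      intro k k' hle h
      obtain ⟨d, hd⟩ := h
      exact ⟨d, ih d hle hd⟩
  | exL A ih =>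
      intro k k' hle h
      obtain ⟨d, hE, hd⟩ := h
      exact ⟨d, W.E_mono hle hE, ih d hle hd⟩

/-- In a prevalent strict finitistic model, assertibility
satisfies the classical truth clauses. -/
theorem assertibility_classical {D : Type} [Nonempty D] (W : SFModel D)
    (hW : W.prevModel) :
    (∀ A B : Fm D, W.assertible (Fm.conj A B) ↔ W.assertible A ∧ W.assertible B) ∧
    (∀ A B : Fm D, W.assertible (Fm.disj A B) ↔ W.assertible A ∨ W.assertible B) ∧
    (∀ A B : Fm D, W.assertible (Fm.impl A B) ↔ (¬ W.assertible A ∨ W.assertible B)) ∧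
    (∀ A : Fm D, W.assertible (Fm.neg A) ↔ ¬ W.assertible A) ∧
    (∀ A : D → Fm D, W.assertible (Fm.allG A) ↔ ∀ d, W.assertible (A d)) ∧
    (∀ A : D → Fm D, W.assertible (Fm.allL A) ↔ ∀ d, W.assertible (A d)) ∧
    (∀ A : D → Fm D, W.assertible (Fm.exG A) ↔ ∃ d, W.assertible (A d)) ∧
    (∀ A : D → Fm D, W.assertible (Fm.exL A) ↔ ∃ d, W.assertible (A d)) := by
  obtain ⟨hF, hO⟩ := hW
  refine ⟨?_, ?_, ?_, ?_, ?_, ?_, ?_, ?_⟩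
  · -- conj
    intro A B
    constructor
    · rintro ⟨k, hA, hB⟩; exact ⟨⟨k, hA⟩, ⟨k, hB⟩⟩
    · rintro ⟨⟨k, hA⟩, hB⟩
      obtain ⟨k', hle, hB'⟩ := hF B hB k
      exact ⟨k', W.force_mono A hle hA, hB'⟩
  · -- disj
    intro A B
    constructor
    · rintro ⟨k, h⟩; exact h.elim (fun h => Or.inl ⟨k, h⟩) (fun h => Or.inr ⟨k, h⟩)
    · rintro (⟨k, h⟩ | ⟨k, h⟩)
      exacts [⟨k, Or.inl h⟩, ⟨k, Or.inr h⟩]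
  · -- impl
    intro A B
    constructor
    · rintro ⟨k, h⟩
      by_cases hA : W.assertible A
      · right
        obtain ⟨k', hle, hA'⟩ := hF A hA k
        obtain ⟨k'', hle', hB⟩ := h k' hle hA'
        exact ⟨k'', hB⟩
      · left; exact hA
    · rintro (hA | hB)
      · refine ⟨W.root, fun k' _ hA' => absurd ⟨k', hA'⟩ hA⟩
      · refine ⟨W.root, fun k' _ _ => hF B hB k'⟩
  · -- neg
    intro A
    constructor
    · rintro ⟨k, h⟩ ⟨l, hl⟩; exact h l hl
    · intro hA
      exact ⟨W.root, fun l hl => hA ⟨l, hl⟩⟩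
  · -- allG
    intro A
    constructor
    · rintro ⟨k, h⟩ d
      obtain ⟨k', _, hA⟩ := h d k (W.refl k)
      exact ⟨k', hA⟩
    · intro h
      exact ⟨W.root, fun d k' _ => hF (A d) (h d) k'⟩
  · -- allL
    intro A
    constructor
    · rintro ⟨k, h⟩ d
      obtain ⟨k', hle, hE⟩ := hO d k
      obtain ⟨k'', _, hA⟩ := h d k' hle hE
      exact ⟨k'', hA⟩
    · intro h
      exact ⟨W.root, fun d k' _ _ => hF (A d) (h d) k'⟩
  · -- exG
    intro A
    constructor
    · rintro ⟨k, d, h⟩; exact ⟨d, k, h⟩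
    · rintro ⟨d, k, h⟩; exact ⟨k, d, h⟩
  · -- exL
    intro A
    constructor
    · rintro ⟨k, d, _, h⟩; exact ⟨d, k, h⟩
    · rintro ⟨d, k, h⟩
      obtain ⟨k', hle, hE⟩ := hO d k
      exact ⟨k', d, hE, W.force_mono (A d) hle h⟩
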